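/- arXiv:2507.07587 — 8 statements merged into one kernel-verified Lean document; each statement's English description precedes it below -/
import Mathlib

section
/- For every integer n ≥ 1, every real c ≥ 0, and every function f : [0,1] → ℝ that is Lipschitz continuous with Lipschitz constant c, the n-th Bernstein polynomial of f satisfies sup_{x ∈ [0,1]} |f(x) − f_n(x)| ≤ c/(2√n). -/
open Finset

/-- For every integer `n ≥ 1`, every real `c ≥ 0`, and every function `f` that is
Lipschitz continuous on `[0,1]` with Lipschitz constant `c`, the `n`-th Bernstein
polynomial `f_n(x) = ∑_{i=0}^n f(i/n) binom(n,i) x^i (1-x)^{n-i}` satisfies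
`sup_{x ∈ [0,1]} |f(x) − f_n(x)| ≤ c / (2 √n)`. -/
theorem bernstein_lipschitz_approx (n : ℕ) (hn : 1 ≤ n) (c : ℝ) (hc : 0 ≤ c)
    (f : ℝ → ℝ)
    (hf : ∀ x ∈ Set.Icc (0:ℝ) 1, ∀ y ∈ Set.Icc (0:ℝ) 1, |f x - f y| ≤ c * |x - y|) :
    ∀ x ∈ Set.Icc (0:ℝ) 1,
      |f x - ∑ i ∈ Finset.range (n + 1),
          f ((i : ℝ) / n) * (n.choose i : ℝ) * x ^ i * (1 - x) ^ (n - i)|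
        ≤ c / (2 * Real.sqrt n) := by
  intro x hx
  obtain ⟨hx0, hx1⟩ := hx
  have hn0 : (0:ℝ) < n := by exact_mod_cast hn
  set w : ℕ → ℝ := fun i => (n.choose i : ℝ) * x ^ i * (1 - x) ^ (n - i) with hwdef
  have hwnn : ∀ i, 0 ≤ w i := fun i =>
    mul_nonneg (mul_nonneg (Nat.cast_nonneg _) (pow_nonneg hx0 _))
      (pow_nonneg (by linarith) _)
  -- sum of weights = 1
  have hsum : ∑ i ∈ Finset.range (n + 1), w i = 1 := by
    have h := add_pow x (1 - x) n
    simp only [add_sub_cancel, one_pow] at h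
    rw [Finset.sum_congr rfl fun i (_ : i ∈ Finset.range (n+1)) =>
      (show w i = x ^ i * (1 - x) ^ (n - i) * (n.choose i : ℝ) by simp [hwdef]; ring)]
    exact h.symm
  -- variance identity
  have hvar : ∑ i ∈ Finset.range (n + 1), (x - (i : ℝ) / n) ^ 2 * w i
      = x * (1 - x) / n := by
    have hv := bernstein.variance (Nat.one_le_iff_ne_zero.mp hn) ⟨x, hx0, hx1⟩
    rw [← Fin.sum_univ_eq_sum_range]
    rw [← hv]
    refine Finset.sum_congr rfl fun k _ => ?_
    rw [bernstein_apply]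
    simp [bernstein.z, hwdef]
  -- key estimate via Cauchy-Schwarz
  have hS : ∑ i ∈ Finset.range (n + 1), |x - (i : ℝ) / n| * w i
      ≤ 1 / (2 * Real.sqrt n) := by
    set S := ∑ i ∈ Finset.range (n + 1), |x - (i : ℝ) / n| * w i with hSdef
    have hS0 : 0 ≤ S :=
      Finset.sum_nonneg fun i _ => mul_nonneg (abs_nonneg _) (hwnn i)
    have hcs : S ^ 2 ≤ x * (1 - x) / n := by
      have := Finset.sum_mul_sq_le_sq_mul_sq (Finset.range (n + 1))
        (fun i => |x - (i : ℝ) / n| * Real.sqrt (w i))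
        (fun i => Real.sqrt (w i))
      have e1 : ∀ i ∈ Finset.range (n + 1),
          (|x - (i : ℝ) / n| * Real.sqrt (w i)) * Real.sqrt (w i)
          = |x - (i : ℝ) / n| * w i := fun i _ => by
        rw [mul_assoc, Real.mul_self_sqrt (hwnn i)]
      have e2 : ∀ i ∈ Finset.range (n + 1),
          (|x - (i : ℝ) / n| * Real.sqrt (w i)) ^ 2
          = (x - (i : ℝ) / n) ^ 2 * w i := fun i _ => by
        rw [mul_pow, Real.sq_sqrt (hwnn i), sq_abs]
      have e3 : ∀ i ∈ Finset.range (n + 1),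
          (Real.sqrt (w i)) ^ 2 = w i := fun i _ => Real.sq_sqrt (hwnn i)
      rw [Finset.sum_congr rfl e1, Finset.sum_congr rfl e2, Finset.sum_congr rfl e3,
        hvar, hsum, mul_one] at this
      exact this
    have hq : x * (1 - x) / n ≤ 1 / (4 * n) := by
      rw [div_le_div_iff₀ hn0 (by positivity)]
      nlinarith [mul_nonneg hn0.le (sq_nonneg (2*x-1))]
    have : S ≤ Real.sqrt (1 / (4 * n)) := by
      rw [Real.le_sqrt hS0]
      · exact hcs.trans hq
      · positivity
    refine this.trans_eq ?_
    rw [show (1:ℝ) / (4 * n) = (1 / (2 * Real.sqrt n)) ^ 2 by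
      rw [div_pow, one_pow, mul_pow, Real.sq_sqrt hn0.le]; norm_num]
    exact Real.sqrt_sq (by positivity)
  -- main computation
  have hfx : f x = ∑ i ∈ Finset.range (n + 1), f x * w i := by
    rw [← Finset.mul_sum, hsum, mul_one]
  calc |f x - ∑ i ∈ Finset.range (n + 1),
          f ((i : ℝ) / n) * (n.choose i : ℝ) * x ^ i * (1 - x) ^ (n - i)|
      = |∑ i ∈ Finset.range (n + 1), (f x - f ((i : ℝ) / n)) * w i| := by
        have h1 : ∑ i ∈ Finset.range (n + 1), (f x - f ((i : ℝ) / n)) * w i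
            = f x - ∑ i ∈ Finset.range (n + 1),
                f ((i : ℝ) / n) * (n.choose i : ℝ) * x ^ i * (1 - x) ^ (n - i) := by
          rw [Finset.sum_congr rfl (fun (i : ℕ) _ => sub_mul (f x) (f ((i:ℝ)/n)) (w i)),
            Finset.sum_sub_distrib, ← hfx]
          congr 1
          exact Finset.sum_congr rfl fun i _ => by simp only [hwdef]; ring
        rw [h1]
    _ ≤ ∑ i ∈ Finset.range (n + 1), |(f x - f ((i : ℝ) / n)) * w i| :=
        Finset.abs_sum_le_sum_abs _ _
    _ ≤ ∑ i ∈ Finset.range (n + 1), c * |x - (i : ℝ) / n| * w i := by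
        refine Finset.sum_le_sum fun i hi => ?_
        rw [abs_mul, abs_of_nonneg (hwnn i)]
        refine mul_le_mul_of_nonneg_right ?_ (hwnn i)
        refine hf x ⟨hx0, hx1⟩ _ ⟨by positivity, ?_⟩
        rw [div_le_one hn0]
        exact_mod_cast Nat.lt_succ_iff.mp (Finset.mem_range.mp hi)
    _ = c * ∑ i ∈ Finset.range (n + 1), |x - (i : ℝ) / n| * w i := by
        rw [Finset.mul_sum]; exact Finset.sum_congr rfl fun i _ => by ring
    _ ≤ c * (1 / (2 * Real.sqrt n)) := mul_le_mul_of_nonneg_left hS hc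
    _ = c / (2 * Real.sqrt n) := by ring
end

section
/- For every integer n ≥ 2 and every real z with 0 < z < 1/n, one has n z − 1 + (1−z)^n ≥ (2/3) · binom(n,2) · z^2. -/
lemma six_choose_three (n : ℕ) : ((n.choose 3 : ℝ)) * 6 = n * (n - 1) * (n - 2) := by
  induction n with
  | zero => simp
  | succ m ih =>
    rw [Nat.choose_succ_succ m 2]
    have h2 : (m.choose 2 : ℝ) = m * (m - 1) / 2 := Nat.cast_choose_two ℝ m
    push_cast
    push_cast at ih
    rw [h2] at *
    ring_nf at *
    linarith

/-- Truncated binomial lower bound: for `z ≤ 1`,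
`(1-z)^n ≥ 1 - n z + C(n,2) z² - C(n,3) z³`. -/
lemma aux_trunc (n : ℕ) (z : ℝ) (hz1 : z ≤ 1) :
    1 - n * z + (n.choose 2 : ℝ) * z ^ 2 - (n.choose 3 : ℝ) * z ^ 3 ≤ (1 - z) ^ n := by
  induction n with
  | zero => simp
  | succ n ih =>
    have h1 : (0:ℝ) ≤ 1 - z := by linarith
    have h2 : (1 - (n:ℝ) * z + (n.choose 2 : ℝ) * z ^ 2 - (n.choose 3 : ℝ) * z ^ 3) * (1 - z)
        ≤ (1 - z) ^ n * (1 - z) := mul_le_mul_of_nonneg_right ih h1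
    have hck : (0:ℝ) ≤ (n.choose 3 : ℝ) := by positivity
    have hz4 : (0:ℝ) ≤ z ^ 4 := by positivity
    have key : 1 - ((n:ℝ) + 1) * z + ((n:ℝ) + (n.choose 2 : ℝ)) * z ^ 2
        - ((n.choose 2 : ℝ) + (n.choose 3 : ℝ)) * z ^ 3 ≤ (1 - z) ^ n * (1 - z) := by
      nlinarith [h2, mul_nonneg hck hz4]
    have e2 : (((n+1).choose 2 : ℕ) : ℝ) = (n:ℝ) + (n.choose 2 : ℝ) := by
      rw [Nat.choose_succ_succ n 1, Nat.choose_one_right]; push_cast; ring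
    have e3 : (((n+1).choose 3 : ℕ) : ℝ) = (n.choose 2 : ℝ) + (n.choose 3 : ℝ) := by
      rw [Nat.choose_succ_succ n 2]; push_cast; ring
    have en : (((n+1 : ℕ)) : ℝ) = (n:ℝ) + 1 := by push_cast; ring
    rw [e2, e3, en, pow_succ (1 - z) n]
    linarith [key]

/-- For every integer `n ≥ 2` and every real `z` with `0 < z < 1/n`,
`n z − 1 + (1−z)^n ≥ (2/3) binom(n,2) z^2`. -/
theorem nz_sub_one_add_pow_ge (n : ℕ) (hn : 2 ≤ n) (z : ℝ) (hz : 0 < z) (hz' : z < 1 / n) :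
    (2 / 3 : ℝ) * (n.choose 2 : ℝ) * z ^ 2 ≤ n * z - 1 + (1 - z) ^ n := by
  have hn0 : (0:ℝ) < n := by
    have : 0 < n := by omega
    exact_mod_cast this
  have hz1 : z ≤ 1 := by
    have : (1:ℝ)/n ≤ 1 := by
      rw [div_le_one hn0]
      exact_mod_cast Nat.one_le_iff_ne_zero.mpr (by omega)
    linarith
  have htr := aux_trunc n z hz1
  have h2 : (n.choose 2 : ℝ) = n * (n - 1) / 2 := Nat.cast_choose_two ℝ n
  have h3 := six_choose_three n
  have hrel : (3:ℝ) * (n.choose 3 : ℝ) = ((n:ℝ) - 2) * (n.choose 2 : ℝ) := by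
    rw [h2]; linarith [h3]
  have hkey : (0:ℝ) ≤ 1 - ((n:ℝ) - 2) * z := by
    have h1 : (n:ℝ) * z < 1 := by
      rw [lt_div_iff₀ hn0] at hz'; linarith
    nlinarith
  have hc2nn : (0:ℝ) ≤ (n.choose 2 : ℝ) := by positivity
  have hz2 : (0:ℝ) ≤ z ^ 2 := by positivity
  have hprod : (0:ℝ) ≤ (n.choose 2 : ℝ) * z ^ 2 * (1 - ((n:ℝ) - 2) * z) :=
    mul_nonneg (mul_nonneg hc2nn hz2) hkey
  nlinarith [htr, hprod, hrel, mul_nonneg (mul_nonneg hc2nn hz2) hz.le,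
    congrArg (fun x => x * z ^ 3) hrel]
end

section
/- Let Λ be a finite Borel measure on [0,1]. Then for every integer n ≥ 2, binom(n,2) · Λ({0}) + ∫_{(0,1]} (n z − 1 + (1−z)^n) z^{−2} Λ(dz) ≥ (2/3) · binom(n,2) · Λ([0, 1/n)). -/
open MeasureTheory

lemma pow_lower (n : ℕ) (z : ℝ) (hz : 0 ≤ z) (hz1 : z ≤ 1) :
    1 - n*z + (n.choose 2)*z^2 - (n.choose 3)*z^3 ≤ (1-z)^n := by
  induction n with
  | zero => norm_num
  | succ n ih =>
    have h1 : (0:ℝ) ≤ 1 - z := by linarith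
    have h3 : (1-z)*(1 - n*z + (n.choose 2)*z^2 - (n.choose 3)*z^3) ≤ (1-z)*(1-z)^n :=
      mul_le_mul_of_nonneg_left ih h1
    have h2 : (1-z)^(n+1) = (1-z)*(1-z)^n := by ring
    have e2 : ((n+1).choose 2 : ℝ) = n.choose 1 + n.choose 2 := by
      rw [Nat.choose_succ_succ']; push_cast; ring
    have e3 : ((n+1).choose 3 : ℝ) = n.choose 2 + n.choose 3 := by
      rw [Nat.choose_succ_succ']; push_cast; ring
    have hc3 : (0:ℝ) ≤ (n.choose 3 : ℝ) := by positivity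
    rw [h2, e2, e3]
    simp only [Nat.choose_one_right]
    push_cast
    nlinarith [mul_nonneg hc3 (pow_nonneg hz 4)]

lemma pow_upper (n : ℕ) (z : ℝ) (hz : 0 ≤ z) (hz1 : z ≤ 1) :
    (1-z)^n ≤ 1 - n*z + (n.choose 2)*z^2 := by
  induction n with
  | zero => norm_num
  | succ n ih =>
    have h1 : (0:ℝ) ≤ 1 - z := by linarith
    have h3 : (1-z)*(1-z)^n ≤ (1-z)*(1 - n*z + (n.choose 2)*z^2) :=
      mul_le_mul_of_nonneg_left ih h1
    have h2 : (1-z)^(n+1) = (1-z)*(1-z)^n := by ring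
    have e2 : ((n+1).choose 2 : ℝ) = n.choose 1 + n.choose 2 := by
      rw [Nat.choose_succ_succ']; push_cast; ring
    have hc2 : (0:ℝ) ≤ (n.choose 2 : ℝ) := by positivity
    rw [h2, e2]
    simp only [Nat.choose_one_right]
    push_cast
    nlinarith [mul_nonneg hc2 (pow_nonneg hz 3)]

lemma choose3_le (n : ℕ) : 3 * n.choose 3 ≤ n * n.choose 2 := by
  have h := Nat.choose_succ_right_eq n 2
  calc 3 * n.choose 3 = n.choose 3 * 3 := by ring
    _ = n.choose 2 * (n - 2) := h
    _ ≤ n.choose 2 * n := Nat.mul_le_mul_left _ (Nat.sub_le _ _)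
    _ = n * n.choose 2 := by ring

lemma f_nonneg (n : ℕ) (z : ℝ) (hz : 0 < z) (hz1 : z ≤ 1) :
    0 ≤ ((n : ℝ) * z - 1 + (1 - z) ^ n) / z ^ 2 := by
  have hb : 1 + (n:ℝ) * (-z) ≤ (1 + (-z))^n := one_add_mul_le_pow (by linarith) n
  have : (0:ℝ) ≤ (n : ℝ) * z - 1 + (1 - z) ^ n := by
    have : (1 + (-z)) = (1 - z) := by ring
    rw [this] at hb; nlinarith
  positivity

lemma f_upper (n : ℕ) (z : ℝ) (hz : 0 < z) (hz1 : z ≤ 1) :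
    ((n : ℝ) * z - 1 + (1 - z) ^ n) / z ^ 2 ≤ (n.choose 2 : ℝ) := by
  rw [div_le_iff₀ (by positivity)]
  have := pow_upper n z hz.le hz1
  nlinarith

lemma f_lower (n : ℕ) (hn : 2 ≤ n) (z : ℝ) (hz : 0 < z) (hzn : z ≤ 1 / n) :
    (2/3 : ℝ) * (n.choose 2 : ℝ) ≤ ((n : ℝ) * z - 1 + (1 - z) ^ n) / z ^ 2 := by
  have hn0 : (0:ℝ) < n := by positivity
  have hz1 : z ≤ 1 := le_trans hzn (by
    rw [div_le_one hn0]; exact_mod_cast Nat.one_le_iff_ne_zero.mpr (by omega))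
  rw [le_div_iff₀ (by positivity)]
  have hlow := pow_lower n z hz.le hz1
  have hch : (3 : ℝ) * n.choose 3 ≤ (n : ℝ) * n.choose 2 := by exact_mod_cast choose3_le n
  have hzn' : z * n ≤ 1 := (le_div_iff₀ hn0).mp hzn
  have hc2 : (0:ℝ) ≤ (n.choose 2 : ℝ) := by positivity
  have hA : 3 * (n.choose 3 : ℝ) * z^3 ≤ (n : ℝ) * n.choose 2 * z^3 :=
    mul_le_mul_of_nonneg_right hch (by positivity)
  have hB : 0 ≤ (n.choose 2 : ℝ) * z^2 * (1 - z * n) :=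
    mul_nonneg (by positivity) (by linarith)
  nlinarith [hA, hB, hlow]


/-- Let `Λ` be a finite Borel measure on `[0,1]`. Then for every integer `n ≥ 2`,
`binom(n,2) Λ({0}) + ∫_{(0,1]} (nz − 1 + (1−z)^n) z^{−2} Λ(dz)
  ≥ (2/3) binom(n,2) Λ([0,1/n))`. -/
theorem measure_integral_lower_bound (Λ : Measure ℝ) [IsFiniteMeasure Λ]
    (hΛ : Λ (Set.Icc (0:ℝ) 1)ᶜ = 0) (n : ℕ) (hn : 2 ≤ n) :
    (2 / 3 : ℝ) * (n.choose 2 : ℝ) * (Λ (Set.Ico 0 (1 / (n : ℝ)))).toReal ≤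
      (n.choose 2 : ℝ) * (Λ {0}).toReal +
        ∫ z in Set.Ioc (0:ℝ) 1, ((n : ℝ) * z - 1 + (1 - z) ^ n) / z ^ 2 ∂Λ := by
  set f : ℝ → ℝ := fun z => ((n : ℝ) * z - 1 + (1 - z) ^ n) / z ^ 2 with hf
  have hn0 : (0:ℝ) < n := by positivity
  have hinv1 : (1 : ℝ) / n ≤ 1 := by
    rw [div_le_one hn0]; exact_mod_cast Nat.one_le_iff_ne_zero.mpr (by omega)
  have hinv0 : (0:ℝ) < 1 / n := by positivity
  have hts : Set.Ioo (0:ℝ) (1/n) ⊆ Set.Ioc (0:ℝ) 1 :=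
    fun x hx => ⟨hx.1, le_trans hx.2.le hinv1⟩
  have hmeas : Measurable f := by
    apply Measurable.div <;> fun_prop
  have hC2 : (0:ℝ) ≤ (n.choose 2 : ℝ) := by positivity
  -- integrability on Ioc 0 1
  have hint : IntegrableOn f (Set.Ioc (0:ℝ) 1) Λ := by
    apply Integrable.mono' (integrable_const ((n.choose 2 : ℝ)))
      hmeas.aestronglyMeasurable
    rw [ae_restrict_iff' measurableSet_Ioc]
    filter_upwards with z hz
    rw [Real.norm_eq_abs, abs_of_nonneg (f_nonneg n z hz.1 hz.2)]
    exact f_upper n z hz.1 hz.2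
  have hint' : IntegrableOn f (Set.Ioo (0:ℝ) (1/n)) Λ := hint.mono_set hts
  -- integral over small interval lower bound
  have h1 : (2/3 : ℝ) * (n.choose 2 : ℝ) * (Λ (Set.Ioo 0 (1/(n:ℝ)))).toReal ≤
      ∫ z in Set.Ioo (0:ℝ) (1/n), f z ∂Λ := by
    apply setIntegral_ge_of_const_le_real measurableSet_Ioo (measure_ne_top Λ _) _ hint'
    exact fun z hz => f_lower n hn z hz.1 hz.2.le
  -- monotonicity of integral in the set
  have h2 : ∫ z in Set.Ioo (0:ℝ) (1/n), f z ∂Λ ≤ ∫ z in Set.Ioc (0:ℝ) 1, f z ∂Λ := by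
    apply setIntegral_mono_set hint
    · rw [Filter.EventuallyLE, ae_restrict_iff' measurableSet_Ioc]
      filter_upwards with z hz
      exact f_nonneg n z hz.1 hz.2
    · exact Filter.Eventually.of_forall hts
  -- measure split
  have hsplit : Λ (Set.Ico 0 (1/(n:ℝ))) = Λ (Set.Ioo 0 (1/(n:ℝ))) + Λ {0} := by
    rw [← Set.Ioo_union_left hinv0, measure_union _ (measurableSet_singleton 0)]
    simp [Set.disjoint_singleton_right]
  have htr : (Λ (Set.Ico 0 (1/(n:ℝ)))).toReal
      = (Λ (Set.Ioo 0 (1/(n:ℝ)))).toReal + (Λ {0}).toReal := by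
    rw [hsplit, ENNReal.toReal_add (measure_ne_top Λ _) (measure_ne_top Λ _)]
  have ha : (0:ℝ) ≤ (Λ {0}).toReal := ENNReal.toReal_nonneg
  rw [htr]
  nlinarith [mul_nonneg hC2 ha]
end

section
/- With the data and notation described in the context, for every natural number n one has B(n) = − binom(n,2) · Λ({0}) − ∫_{(0,1]} (n z − 1 + (1−z)^n) z^{−2} Λ(dz) − C·n, where C := ν((−1,1)) + θ_a + θ_A − μ((−1,1)) − ∑_{ℓ=2}^κ β_ℓ (ℓ−1). -/
open MeasureTheory Finset

lemma sumA (n : ℕ) (x y : ℝ) :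
    ∑ k ∈ Finset.Icc 1 n, (n.choose k : ℝ) * k * (x ^ (k - 1) * y ^ (n - k))
      = n * (x + y) ^ (n - 1) := by
  cases n with
  | zero => simp
  | succ m =>
    rw [← Finset.Ico_add_one_right_eq_Icc, Finset.sum_Ico_eq_sum_range]
    have : m + 1 + 1 - 1 = m + 1 := rfl
    rw [this]
    have key : ∀ i ∈ Finset.range (m + 1),
        ((m+1).choose (1 + i) : ℝ) * ((1 + i : ℕ) : ℝ) * (x ^ (1 + i - 1) * y ^ (m + 1 - (1 + i)))
        = (m + 1 : ℝ) * ((m.choose i : ℝ) * (x ^ i * y ^ (m - i))) := by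
      intro i hi
      have h := Nat.add_one_mul_choose_eq m i
      have h' : ((m+1 : ℕ) : ℝ) * (m.choose i : ℝ)
          = ((m+1).choose (i+1) : ℝ) * ((i+1 : ℕ) : ℝ) := by exact_mod_cast congrArg Nat.cast h
      have e1 : 1 + i - 1 = i := by omega
      have e2 : m + 1 - (1 + i) = m - i := by omega
      have e3 : 1 + i = i + 1 := by omega
      rw [e1, e2, e3]
      push_cast at h' ⊢
      linear_combination (-(x ^ i * y ^ (m - i))) * h'
    rw [Finset.sum_congr rfl key, ← Finset.mul_sum]
    congr 1
    · push_cast; ring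
    · rw [add_pow]
      simp only [Nat.add_sub_cancel]
      exact (Finset.sum_congr rfl (fun i hi => by ring)).symm

lemma sumBinom (n : ℕ) (z : ℝ) :
    ∑ k ∈ Finset.Icc 1 n, (n.choose k : ℝ) * (z ^ k * (1 - z) ^ (n - k))
      = 1 - (1 - z) ^ n := by
  have h := add_pow z (1 - z) n
  rw [show z + (1 - z) = 1 by ring, one_pow] at h
  rw [Finset.sum_range_succ'] at h
  simp only [pow_zero, Nat.sub_zero, Nat.choose_zero_right, Nat.cast_one, one_mul, mul_one] at h
  rw [← Finset.Ico_add_one_right_eq_Icc, Finset.sum_Ico_eq_sum_range]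
  have e : n + 1 - 1 = n := rfl
  rw [e]
  have : ∀ i ∈ Finset.range n,
      (n.choose (1 + i) : ℝ) * (z ^ (1 + i) * (1 - z) ^ (n - (1 + i)))
      = z ^ (i + 1) * (1 - z) ^ (n - (i + 1)) * (n.choose (i + 1) : ℝ) := by
    intro i hi; rw [show 1 + i = i + 1 by omega]; ring
  rw [Finset.sum_congr rfl this]
  linarith [h]

lemma sumB (n : ℕ) (z : ℝ) :
    (∑ k ∈ Finset.Icc 2 n, (n.choose k : ℝ) * ((k : ℝ) - 1) * (z ^ (k - 2) * (1 - z) ^ (n - k)))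
      * z ^ 2 = n * z - 1 + (1 - z) ^ n := by
  have h1 : (∑ k ∈ Finset.Icc 2 n,
        (n.choose k : ℝ) * ((k : ℝ) - 1) * (z ^ (k - 2) * (1 - z) ^ (n - k))) * z ^ 2
      = ∑ k ∈ Finset.Icc 2 n,
        (n.choose k : ℝ) * ((k : ℝ) - 1) * (z ^ k * (1 - z) ^ (n - k)) := by
    rw [Finset.sum_mul]
    refine Finset.sum_congr rfl fun k hk => ?_
    have hk2 : 2 ≤ k := (Finset.mem_Icc.mp hk).1
    have hz : z ^ (k - 2) * z ^ 2 = z ^ k := by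
      rw [← pow_add]; congr 1; omega
    linear_combination ((n.choose k : ℝ) * ((k : ℝ) - 1) * (1 - z) ^ (n - k)) * hz
  have h2 : ∑ k ∈ Finset.Icc 2 n,
        (n.choose k : ℝ) * ((k : ℝ) - 1) * (z ^ k * (1 - z) ^ (n - k))
      = ∑ k ∈ Finset.Icc 1 n,
        (n.choose k : ℝ) * ((k : ℝ) - 1) * (z ^ k * (1 - z) ^ (n - k)) := by
    refine Finset.sum_subset (fun x hx => ?_) (fun x hx hx2 => ?_)
    · rw [Finset.mem_Icc] at hx ⊢; omega
    · rw [Finset.mem_Icc] at hx hx2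
      have : x = 1 := by omega
      subst this; norm_num
  have h3 : ∑ k ∈ Finset.Icc 1 n,
        (n.choose k : ℝ) * ((k : ℝ) - 1) * (z ^ k * (1 - z) ^ (n - k))
      = (∑ k ∈ Finset.Icc 1 n, (n.choose k : ℝ) * k * (z * (z ^ (k - 1) * (1 - z) ^ (n - k))))
        - ∑ k ∈ Finset.Icc 1 n, (n.choose k : ℝ) * (z ^ k * (1 - z) ^ (n - k)) := by
    rw [← Finset.sum_sub_distrib]
    refine Finset.sum_congr rfl fun k hk => ?_
    have hk1 : 1 ≤ k := (Finset.mem_Icc.mp hk).1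
    have hz : z * z ^ (k - 1) = z ^ k := by
      rw [← pow_succ']; congr 1; omega
    linear_combination (-((n.choose k : ℝ) * (k : ℝ) * (1 - z) ^ (n - k))) * hz
  have h4 : (∑ k ∈ Finset.Icc 1 n, (n.choose k : ℝ) * k * (z * (z ^ (k - 1) * (1 - z) ^ (n - k))))
      = z * (n * (z + (1 - z)) ^ (n - 1)) := by
    rw [← sumA n z (1 - z), Finset.mul_sum]
    exact Finset.sum_congr rfl fun k hk => by ring
  rw [h1, h2, h3, h4, sumBinom, show z + (1 - z) = 1 by ring, one_pow]
  ring

lemma sumSig (ρ : Measure ℝ) [IsFiniteMeasure ρ]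
    (hρ : ρ (Set.Ioo (-1:ℝ) 1)ᶜ = 0) (n : ℕ) :
    ∑ k ∈ Finset.Icc 1 n, (n.choose k : ℝ) * (k : ℝ)
        * ∫ z, |z| ^ (k - 1) * (1 - |z|) ^ (n - k) ∂ρ
      = n * (ρ (Set.Ioo (-1:ℝ) 1)).toReal := by
  have hmem : ∀ᵐ z ∂ρ, z ∈ Set.Ioo (-1:ℝ) 1 := by
    rw [ae_iff]
    convert hρ using 2; rfl
  have hcont : ∀ k : ℕ, Continuous fun z : ℝ => |z| ^ (k - 1) * (1 - |z|) ^ (n - k) :=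
    fun k => ((continuous_abs.pow _).mul ((continuous_const.sub continuous_abs).pow _))
  have hint : ∀ k : ℕ, Integrable (fun z : ℝ => |z| ^ (k - 1) * (1 - |z|) ^ (n - k)) ρ := by
    intro k
    refine Integrable.mono' (integrable_const 1) (hcont k).aestronglyMeasurable ?_
    filter_upwards [hmem] with z hz
    have h1 : |z| < 1 := abs_lt.mpr ⟨hz.1, hz.2⟩
    have h0 : (0:ℝ) ≤ |z| := abs_nonneg z
    have h2 : (0:ℝ) ≤ 1 - |z| := by linarith
    rw [Real.norm_eq_abs, abs_of_nonneg (mul_nonneg (pow_nonneg h0 _) (pow_nonneg h2 _))]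
    exact mul_le_one₀ (pow_le_one₀ h0 h1.le) (pow_nonneg h2 _) (pow_le_one₀ h2 (by linarith))
  have step1 : ∑ k ∈ Finset.Icc 1 n, (n.choose k : ℝ) * (k : ℝ)
        * ∫ z, |z| ^ (k - 1) * (1 - |z|) ^ (n - k) ∂ρ
      = ∫ z, ∑ k ∈ Finset.Icc 1 n,
          (n.choose k : ℝ) * (k : ℝ) * (|z| ^ (k - 1) * (1 - |z|) ^ (n - k)) ∂ρ := by
    rw [MeasureTheory.integral_finset_sum _
      (fun k _ => ((hint k).const_mul ((n.choose k : ℝ) * (k : ℝ))))]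
    exact Finset.sum_congr rfl fun k _ => (MeasureTheory.integral_const_mul _ _).symm
  rw [step1]
  have : ∀ z : ℝ, ∑ k ∈ Finset.Icc 1 n,
      (n.choose k : ℝ) * (k : ℝ) * (|z| ^ (k - 1) * (1 - |z|) ^ (n - k)) = (n : ℝ) := by
    intro z
    rw [sumA n |z| (1 - |z|), show |z| + (1 - |z|) = 1 by ring, one_pow, mul_one]
  simp_rw [this]
  rw [MeasureTheory.integral_const, smul_eq_mul]
  have huniv : ρ Set.univ = ρ (Set.Ioo (-1:ℝ) 1) := by
    rw [← measure_add_measure_compl measurableSet_Ioo, hρ, add_zero]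
  rw [measureReal_def, huniv, mul_comm]

/-- With `Λ` a finite measure on `[0,1]`, `μ, ν` finite measures supported in `(−1,1)`
with no atom at `0`, mutation rates `θa, θA ≥ 0`, and selection rates `β_2, …, β_κ ≥ 0`,
the value `B(n)` of the rate operator of the line-counting process applied to the
identity satisfies
`B(n) = − binom(n,2) Λ({0}) − ∫_{(0,1]} (nz − 1 + (1−z)^n) z^{−2} Λ(dz) − C n`,
where `C = ν((−1,1)) + θa + θA − μ((−1,1)) − ∑_{ℓ=2}^κ β_ℓ (ℓ−1)`. -/
theorem rate_operator_identity
    (Λ μ ν : Measure ℝ)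
    [IsFiniteMeasure Λ] [IsFiniteMeasure μ] [IsFiniteMeasure ν]
    (hΛ : Λ (Set.Icc (0:ℝ) 1)ᶜ = 0)
    (hμ : μ (Set.Ioo (-1:ℝ) 1)ᶜ = 0) (hν : ν (Set.Ioo (-1:ℝ) 1)ᶜ = 0)
    (hμ0 : μ {0} = 0) (hν0 : ν {0} = 0)
    (θa θA : ℝ) (hθa : 0 ≤ θa) (hθA : 0 ≤ θA)
    (κ : ℕ) (hκ : 2 ≤ κ) (β : ℕ → ℝ) (hβ : ∀ ℓ, 0 ≤ β ℓ)
    (lam : ℕ → ℕ → ℝ)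
    (hlam : ∀ n k, lam n k = ∫ z in Set.Icc (0:ℝ) 1, z ^ (k - 2) * (1 - z) ^ (n - k) ∂Λ)
    (sig : ℕ → ℕ → ℝ)
    (hsig : ∀ n k, sig n k = ∫ z, |z| ^ (k - 1) * (1 - |z|) ^ (n - k) ∂μ)
    (m : ℕ → ℕ → ℝ)
    (hm : ∀ n k, m n k = ∫ z, |z| ^ (k - 1) * (1 - |z|) ^ (n - k) ∂ν)
    (B : ℕ → ℝ)
    (hB : ∀ n : ℕ, B n =
      -(∑ k ∈ Finset.Icc 2 n, (n.choose k : ℝ) * ((k : ℝ) - 1) * lam n k)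
      + ∑ k ∈ Finset.Icc 1 n, (n.choose k : ℝ) * (k : ℝ) * sig n k
      + (n : ℝ) * ∑ ℓ ∈ Finset.Icc 2 κ, β ℓ * ((ℓ : ℝ) - 1)
      - ∑ k ∈ Finset.Icc 1 n, (n.choose k : ℝ) * (k : ℝ) * m n k
      - (n : ℝ) * (θa + θA))
    (C : ℝ)
    (hC : C = (ν (Set.Ioo (-1:ℝ) 1)).toReal + θa + θA - (μ (Set.Ioo (-1:ℝ) 1)).toReal
      - ∑ ℓ ∈ Finset.Icc 2 κ, β ℓ * ((ℓ : ℝ) - 1)) :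
    ∀ n : ℕ, B n = -((n.choose 2 : ℝ) * (Λ {0}).toReal)
      - (∫ z in Set.Ioc (0:ℝ) 1, ((n : ℝ) * z - 1 + (1 - z) ^ n) / z ^ 2 ∂Λ)
      - C * n := by
  intro n
  -- the sums over μ and ν
  have hμsum : ∑ k ∈ Finset.Icc 1 n, (n.choose k : ℝ) * (k : ℝ) * sig n k
      = n * (μ (Set.Ioo (-1:ℝ) 1)).toReal := by
    simp_rw [hsig]; exact sumSig μ hμ n
  have hνsum : ∑ k ∈ Finset.Icc 1 n, (n.choose k : ℝ) * (k : ℝ) * m n k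
      = n * (ν (Set.Ioo (-1:ℝ) 1)).toReal := by
    simp_rw [hm]; exact sumSig ν hν n
  -- the Λ part
  set G : ℝ → ℝ := fun z => ∑ k ∈ Finset.Icc 2 n,
    (n.choose k : ℝ) * ((k : ℝ) - 1) * (z ^ (k - 2) * (1 - z) ^ (n - k)) with hG
  have hGcont : Continuous G := by
    apply continuous_finset_sum
    intro k _
    exact continuous_const.mul ((continuous_pow _).mul
      ((continuous_const.sub continuous_id).pow _))
  have hGint : IntegrableOn G (Set.Icc (0:ℝ) 1) Λ :=
    hGcont.continuousOn.integrableOn_compact isCompact_Icc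
  have hΛsum : ∑ k ∈ Finset.Icc 2 n, (n.choose k : ℝ) * ((k : ℝ) - 1) * lam n k
      = ∫ z in Set.Icc (0:ℝ) 1, G z ∂Λ := by
    simp_rw [hlam, hG]
    rw [MeasureTheory.integral_finset_sum]
    · exact Finset.sum_congr rfl fun k _ => (MeasureTheory.integral_const_mul _ _).symm
    · intro k _
      refine Integrable.const_mul ?_ _
      exact (((continuous_pow _).mul
        ((continuous_const.sub continuous_id).pow _)).continuousOn.integrableOn_compact
        isCompact_Icc)
  have hsplit : Set.Icc (0:ℝ) 1 = {0} ∪ Set.Ioc (0:ℝ) 1 := by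
    rw [← Set.Ioc_insert_left (by norm_num : (0:ℝ) ≤ 1), Set.insert_eq]
  have hdisj : Disjoint ({0} : Set ℝ) (Set.Ioc (0:ℝ) 1) := by
    simp [Set.disjoint_singleton_left]
  have hunion : ∫ z in Set.Icc (0:ℝ) 1, G z ∂Λ
      = (∫ z in ({0} : Set ℝ), G z ∂Λ) + ∫ z in Set.Ioc (0:ℝ) 1, G z ∂Λ := by
    rw [hsplit] at hGint ⊢
    exact MeasureTheory.setIntegral_union hdisj measurableSet_Ioc
      (hGint.mono_set Set.subset_union_left) (hGint.mono_set Set.subset_union_right)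
  have hG0 : G 0 = (n.choose 2 : ℝ) := by
    simp only [hG]
    rw [Finset.sum_eq_single 2]
    · norm_num
    · intro k hk hk2
      have : k - 2 ≠ 0 := by rw [Finset.mem_Icc] at hk; omega
      rw [zero_pow this]; ring
    · intro h2
      rw [Finset.mem_Icc] at h2
      have : n < 2 := by omega
      rw [Nat.choose_eq_zero_of_lt this]; norm_num
  have hsing : ∫ z in ({0} : Set ℝ), G z ∂Λ = (Λ {0}).toReal * (n.choose 2 : ℝ) := by
    rw [MeasureTheory.integral_singleton, hG0, smul_eq_mul, measureReal_def]
  have hIoc : ∫ z in Set.Ioc (0:ℝ) 1, G z ∂Λ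
      = ∫ z in Set.Ioc (0:ℝ) 1, ((n : ℝ) * z - 1 + (1 - z) ^ n) / z ^ 2 ∂Λ := by
    refine MeasureTheory.setIntegral_congr_fun measurableSet_Ioc fun z hz => ?_
    have hz0 : z ≠ 0 := ne_of_gt hz.1
    simp only [hG]
    rw [eq_div_iff (pow_ne_zero 2 hz0)]
    exact sumB n z
  rw [hB n, hμsum, hνsum, hΛsum, hunion, hsing, hIoc, hC]
  ring
end

section
/- With the data and notation described in the context, for every natural number n one has B(n) ≤ −C·n, where C := ν((−1,1)) + θ_a + θ_A − μ((−1,1)) − ∑_{ℓ=2}^κ β_ℓ (ℓ−1). -/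
open MeasureTheory Finset


lemma sum_id (n : ℕ) (x : ℝ) :
    ∑ k ∈ Finset.Icc 1 n, (n.choose k : ℝ) * (k : ℝ) * (x ^ (k - 1) * (1 - x) ^ (n - k)) = n := by
  cases n with
  | zero => simp
  | succ mm =>
    have hset : Finset.Icc 1 (mm+1) = Finset.image (· + 1) (Finset.range (mm+1)) := by
      ext a
      simp only [Finset.mem_Icc, Finset.mem_image, Finset.mem_range]
      constructor
      · rintro ⟨h1, h2⟩; exact ⟨a - 1, by omega, by omega⟩
      · rintro ⟨b, hb, rfl⟩; omega
    rw [hset, Finset.sum_image (by intro a _ b _ h; simp only at h; omega)]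
    have h1 : ∀ i ∈ Finset.range (mm + 1),
        ((mm+1).choose (i+1) : ℝ) * ((i+1 : ℕ) : ℝ) * (x ^ (i+1 - 1) * (1 - x) ^ (mm+1 - (i+1)))
        = (mm+1 : ℝ) * (x ^ i * (1 - x) ^ (mm - i) * (mm.choose i : ℝ)) := by
      intro i hi
      have hc' : ((mm+1).choose (i+1)) * (i+1) = (mm+1) * mm.choose i := by
        rw [mul_comm (mm+1) _, ← Nat.add_one_mul_choose_eq, mul_comm]
      have hc : ((mm+1).choose (i+1) : ℝ) * ((i+1 : ℕ) : ℝ) = (mm+1 : ℝ) * (mm.choose i : ℝ) := by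
        exact_mod_cast congrArg (Nat.cast : ℕ → ℝ) hc'
      have h2 : i + 1 - 1 = i := by omega
      have h3 : mm + 1 - (i + 1) = mm - i := by omega
      rw [h2, h3, hc]; ring
    rw [Finset.sum_congr rfl h1, ← Finset.mul_sum, ← add_pow]
    norm_num

lemma sum_integral (μ : Measure ℝ) [IsFiniteMeasure μ]
    (hμ : μ (Set.Ioo (-1:ℝ) 1)ᶜ = 0) (n : ℕ) :
    ∑ k ∈ Finset.Icc 1 n, (n.choose k : ℝ) * (k : ℝ) *
        (∫ z, |z| ^ (k - 1) * (1 - |z|) ^ (n - k) ∂μ)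
      = (n : ℝ) * (μ (Set.Ioo (-1:ℝ) 1)).toReal := by
  have hae : ∀ᵐ z ∂μ, z ∈ Set.Ioo (-1:ℝ) 1 := by
    have he : {a : ℝ | ¬ a ∈ Set.Ioo (-1:ℝ) 1} = (Set.Ioo (-1:ℝ) 1)ᶜ := rfl
    rw [MeasureTheory.ae_iff, he]; exact hμ
  have hint : ∀ k ∈ Finset.Icc 1 n,
      Integrable (fun z : ℝ => |z| ^ (k - 1) * (1 - |z|) ^ (n - k)) μ := by
    intro k _
    refine Integrable.mono' (integrable_const 1)
      (((continuous_abs.pow _).mul ((continuous_const.sub continuous_abs).pow _)).aestronglyMeasurable)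
      (hae.mono fun z hz => ?_)
    have h0 : (0:ℝ) ≤ |z| := abs_nonneg z
    have h1 : |z| ≤ 1 := le_of_lt (abs_lt.mpr ⟨hz.1, hz.2⟩)
    have ha : (0:ℝ) ≤ |z| ^ (k-1) := pow_nonneg h0 _
    have hb : |z| ^ (k-1) ≤ 1 := pow_le_one₀ h0 h1
    have hc : (0:ℝ) ≤ (1 - |z|) ^ (n-k) := pow_nonneg (by linarith) _
    have hd : (1 - |z|) ^ (n-k) ≤ 1 := pow_le_one₀ (by linarith) (by linarith)
    rw [Real.norm_eq_abs, abs_of_nonneg (mul_nonneg ha hc)]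
    calc |z| ^ (k-1) * (1 - |z|) ^ (n-k) ≤ 1 * 1 := mul_le_mul hb hd hc zero_le_one
    _ = 1 := mul_one 1
  calc ∑ k ∈ Finset.Icc 1 n, (n.choose k : ℝ) * (k : ℝ) *
        (∫ z, |z| ^ (k - 1) * (1 - |z|) ^ (n - k) ∂μ)
      = ∑ k ∈ Finset.Icc 1 n,
        (∫ z, (n.choose k : ℝ) * (k : ℝ) * (|z| ^ (k - 1) * (1 - |z|) ^ (n - k)) ∂μ) := by
        refine Finset.sum_congr rfl fun k _ => ?_
        rw [integral_const_mul]
    _ = ∫ z, ∑ k ∈ Finset.Icc 1 n,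
        (n.choose k : ℝ) * (k : ℝ) * (|z| ^ (k - 1) * (1 - |z|) ^ (n - k)) ∂μ := by
        rw [MeasureTheory.integral_finset_sum]
        intro k hk
        exact (hint k hk).const_mul _
    _ = ∫ _z, (n : ℝ) ∂μ := by
        refine integral_congr_ae (Filter.Eventually.of_forall fun z => ?_)
        exact sum_id n |z|
    _ = (n : ℝ) * (μ Set.univ).toReal := by rw [integral_const, smul_eq_mul, measureReal_def]; ring
    _ = (n : ℝ) * (μ (Set.Ioo (-1:ℝ) 1)).toReal := by
        congr 2
        rw [← measure_add_measure_compl (measurableSet_Ioo : MeasurableSet (Set.Ioo (-1:ℝ) 1)), hμ, add_zero]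

/-- With the data of the `Λ`-Wright–Fisher model with mutation, selection and
environment, the value `B(n)` of the rate operator of the line-counting process
applied to the identity satisfies `B(n) ≤ −C n`, where
`C = ν((−1,1)) + θa + θA − μ((−1,1)) − ∑_{ℓ=2}^κ β_ℓ (ℓ−1)`. -/
theorem rate_operator_le
    (Λ μ ν : Measure ℝ)
    [IsFiniteMeasure Λ] [IsFiniteMeasure μ] [IsFiniteMeasure ν]
    (hΛ : Λ (Set.Icc (0:ℝ) 1)ᶜ = 0)
    (hμ : μ (Set.Ioo (-1:ℝ) 1)ᶜ = 0) (hν : ν (Set.Ioo (-1:ℝ) 1)ᶜ = 0)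
    (hμ0 : μ {0} = 0) (hν0 : ν {0} = 0)
    (θa θA : ℝ) (hθa : 0 ≤ θa) (hθA : 0 ≤ θA)
    (κ : ℕ) (hκ : 2 ≤ κ) (β : ℕ → ℝ) (hβ : ∀ ℓ, 0 ≤ β ℓ)
    (lam : ℕ → ℕ → ℝ)
    (hlam : ∀ n k, lam n k = ∫ z in Set.Icc (0:ℝ) 1, z ^ (k - 2) * (1 - z) ^ (n - k) ∂Λ)
    (sig : ℕ → ℕ → ℝ)
    (hsig : ∀ n k, sig n k = ∫ z, |z| ^ (k - 1) * (1 - |z|) ^ (n - k) ∂μ)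
    (m : ℕ → ℕ → ℝ)
    (hm : ∀ n k, m n k = ∫ z, |z| ^ (k - 1) * (1 - |z|) ^ (n - k) ∂ν)
    (B : ℕ → ℝ)
    (hB : ∀ n : ℕ, B n =
      -(∑ k ∈ Finset.Icc 2 n, (n.choose k : ℝ) * ((k : ℝ) - 1) * lam n k)
      + ∑ k ∈ Finset.Icc 1 n, (n.choose k : ℝ) * (k : ℝ) * sig n k
      + (n : ℝ) * ∑ ℓ ∈ Finset.Icc 2 κ, β ℓ * ((ℓ : ℝ) - 1)
      - ∑ k ∈ Finset.Icc 1 n, (n.choose k : ℝ) * (k : ℝ) * m n k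
      - (n : ℝ) * (θa + θA))
    (C : ℝ)
    (hC : C = (ν (Set.Ioo (-1:ℝ) 1)).toReal + θa + θA - (μ (Set.Ioo (-1:ℝ) 1)).toReal
      - ∑ ℓ ∈ Finset.Icc 2 κ, β ℓ * ((ℓ : ℝ) - 1)) :
    ∀ n : ℕ, B n ≤ -C * n := by
  intro n
  have hσ : ∑ k ∈ Finset.Icc 1 n, (n.choose k : ℝ) * (k : ℝ) * sig n k
      = (n : ℝ) * (μ (Set.Ioo (-1:ℝ) 1)).toReal := by
    simpa only [hsig] using sum_integral μ hμ n
  have hmm : ∑ k ∈ Finset.Icc 1 n, (n.choose k : ℝ) * (k : ℝ) * m n k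
      = (n : ℝ) * (ν (Set.Ioo (-1:ℝ) 1)).toReal := by
    simpa only [hm] using sum_integral ν hν n
  have hΛpos : 0 ≤ ∑ k ∈ Finset.Icc 2 n, (n.choose k : ℝ) * ((k : ℝ) - 1) * lam n k := by
    refine Finset.sum_nonneg fun k hk => ?_
    have hk2 : 2 ≤ k := (Finset.mem_Icc.mp hk).1
    have h1 : (0:ℝ) ≤ (n.choose k : ℝ) * ((k : ℝ) - 1) := by
      have : (2:ℝ) ≤ (k:ℝ) := by exact_mod_cast hk2
      exact mul_nonneg (Nat.cast_nonneg _) (by linarith)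
    refine mul_nonneg h1 ?_
    rw [hlam]
    refine setIntegral_nonneg measurableSet_Icc fun z hz => ?_
    exact mul_nonneg (pow_nonneg hz.1 _) (pow_nonneg (by linarith [hz.2]) _)
  rw [hB, hC, hσ, hmm]
  nlinarith [hΛpos]
end

section
/- With the data and notation described in the context, assume in addition that there exist δ ∈ (0,1) and x₀ ∈ (0,1) such that Λ([0,x)) ≥ x^δ for every x ∈ (0,x₀) (this is an equivalent form of the condition limsup_{x→0} log Λ([0,x)) / log x < 1). Then there exist γ ∈ (1,2) and a natural number n₀ such that B(n) ≤ −n^γ for every n ≥ n₀. -/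
open MeasureTheory Finset
lemma binom_sum_id (n : ℕ) (x : ℝ) :
    ∑ k ∈ Icc 1 n, (n.choose k : ℝ) * (k : ℝ) * (x ^ (k - 1) * (1 - x) ^ (n - k)) = n := by
  cases n with
  | zero => simp
  | succ m =>
    rw [← Finset.Ico_add_one_right_eq_Icc, Finset.sum_Ico_eq_sum_range]
    simp only [Nat.add_sub_cancel]
    have key : ∀ j ∈ range (m + 1),
        ((m+1).choose (1 + j) : ℝ) * ((1 + j : ℕ) : ℝ) *
          (x ^ ((1 + j) - 1) * (1 - x) ^ ((m + 1) - (1 + j)))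
        = ((m : ℝ) + 1) * (x ^ j * (1 - x) ^ (m - j) * (m.choose j : ℝ)) := by
      intro j hj
      have h1 : (1 + j) - 1 = j := by omega
      have h2 : (m + 1) - (1 + j) = m - j := by omega
      have h3 : ((m+1).choose (1 + j) : ℝ) * ((1 + j : ℕ) : ℝ)
          = ((m : ℝ) + 1) * (m.choose j : ℝ) := by
        rw [add_comm 1 j]
        exact_mod_cast (Nat.add_one_mul_choose_eq m j).symm
      rw [h1, h2, h3]; ring
    rw [Finset.sum_congr rfl key, ← Finset.mul_sum, ← add_pow]
    simp

lemma sigma_sum (μ : Measure ℝ) [IsFiniteMeasure μ] (hμ : μ (Set.Ioo (-1:ℝ) 1)ᶜ = 0)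
    (n : ℕ) :
    ∑ k ∈ Icc 1 n, (n.choose k : ℝ) * (k : ℝ) * (∫ z, |z| ^ (k-1) * (1-|z|) ^ (n-k) ∂μ)
      = n * (μ Set.univ).toReal := by
  have hae : ∀ᵐ z ∂μ, z ∈ Set.Ioo (-1:ℝ) 1 := by
    rw [ae_iff]; exact hμ
  have hint : ∀ k, Integrable (fun z : ℝ => (n.choose k : ℝ) * (k : ℝ) *
      (|z| ^ (k-1) * (1-|z|) ^ (n-k))) μ := by
    intro k
    apply Integrable.const_mul
    apply Integrable.mono' (integrable_const (1:ℝ))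
    · exact (Continuous.mul (continuous_abs.pow _)
        ((continuous_const.sub continuous_abs).pow _)).aestronglyMeasurable
    · filter_upwards [hae] with z hz
      have h1 : |z| < 1 := abs_lt.mpr ⟨hz.1, hz.2⟩
      have h0 : (0:ℝ) ≤ |z| := abs_nonneg z
      have h2 : (0:ℝ) ≤ 1 - |z| := by linarith
      rw [Real.norm_eq_abs, abs_of_nonneg (mul_nonneg (pow_nonneg h0 _) (pow_nonneg h2 _))]
      calc |z| ^ (k-1) * (1-|z|) ^ (n-k) ≤ 1 * 1 := by
            apply mul_le_mul _ _ (pow_nonneg h2 _) zero_le_one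
            · exact pow_le_one₀ h0 h1.le
            · exact pow_le_one₀ h2 (by linarith)
        _ = 1 := by ring
  have step1 : ∀ k ∈ Icc 1 n, (n.choose k : ℝ) * (k : ℝ) *
      (∫ z, |z| ^ (k-1) * (1-|z|) ^ (n-k) ∂μ)
      = ∫ z, (n.choose k : ℝ) * (k : ℝ) * (|z| ^ (k-1) * (1-|z|) ^ (n-k)) ∂μ := by
    intro k _
    rw [MeasureTheory.integral_const_mul]
  rw [Finset.sum_congr rfl step1, ← integral_finset_sum _ (fun k _ => hint k)]
  have : ∀ z : ℝ, ∑ k ∈ Icc 1 n, (n.choose k : ℝ) * (k : ℝ) *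
      (|z| ^ (k-1) * (1-|z|) ^ (n-k)) = (n : ℝ) := fun z => binom_sum_id n |z|
  rw [integral_congr_ae (Filter.Eventually.of_forall this), integral_const, smul_eq_mul,
    mul_comm]
  rfl

lemma lam_sum_lb (Λ : Measure ℝ) [IsFiniteMeasure Λ] (n : ℕ) (hn : 2 ≤ n) (x : ℝ)
    (hx0 : 0 < x) (hx1 : x ≤ 1/(2*(n:ℝ))) :
    (n:ℝ) * ((n:ℝ)-1)/4 * (Λ (Set.Ico 0 x)).toReal
      ≤ ∑ k ∈ Icc 2 n, (n.choose k : ℝ) * ((k:ℝ)-1) *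
        (∫ z in Set.Icc (0:ℝ) 1, z ^ (k-2) * (1-z) ^ (n-k) ∂Λ) := by
  have hn2 : (2:ℝ) ≤ (n:ℝ) := by exact_mod_cast hn
  set H : ℝ → ℝ := fun z => ∑ k ∈ Icc 2 n, (n.choose k : ℝ) * ((k:ℝ)-1) *
    (z ^ (k-2) * (1-z) ^ (n-k)) with hH
  have hint : ∀ k, IntegrableOn (fun z : ℝ => (n.choose k : ℝ) * ((k:ℝ)-1) *
      (z ^ (k-2) * (1-z) ^ (n-k))) (Set.Icc 0 1) Λ := by
    intro k
    apply Integrable.const_mul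
    apply Integrable.mono' (integrable_const (1:ℝ))
    · exact (Continuous.mul (continuous_pow _)
        ((continuous_const.sub continuous_id).pow _)).aestronglyMeasurable
    · rw [ae_restrict_iff' measurableSet_Icc]
      refine Filter.Eventually.of_forall fun z hz => ?_
      obtain ⟨h0, h1⟩ := hz
      have h2 : (0:ℝ) ≤ 1 - z := by linarith
      rw [Real.norm_eq_abs, abs_of_nonneg (mul_nonneg (pow_nonneg h0 _) (pow_nonneg h2 _))]
      calc z ^ (k-2) * (1-z) ^ (n-k) ≤ 1 * 1 := by
            apply mul_le_mul _ _ (pow_nonneg h2 _) zero_le_one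
            · exact pow_le_one₀ h0 h1
            · exact pow_le_one₀ h2 (by linarith)
        _ = 1 := by ring
  have hHint : IntegrableOn H (Set.Icc 0 1) Λ := by
    apply integrable_finset_sum _ (fun k _ => hint k)
  have hsum : ∑ k ∈ Icc 2 n, (n.choose k : ℝ) * ((k:ℝ)-1) *
      (∫ z in Set.Icc (0:ℝ) 1, z ^ (k-2) * (1-z) ^ (n-k) ∂Λ)
      = ∫ z in Set.Icc (0:ℝ) 1, H z ∂Λ := by
    rw [integral_finset_sum _ (fun k _ => hint k)]
    exact Finset.sum_congr rfl fun k _ => (MeasureTheory.integral_const_mul _ _).symm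
  rw [hsum]
  have hx1' : x ≤ 1 := by
    have hpos : (0:ℝ) < 2*(n:ℝ) := by linarith
    have h4 : (1:ℝ)/(2*(n:ℝ)) ≤ 1 := by rw [div_le_one hpos]; linarith
    exact hx1.trans h4
  have hsub : Set.Ico (0:ℝ) x ⊆ Set.Icc 0 1 := fun z hz =>
    ⟨hz.1, le_trans (le_of_lt hz.2) hx1'⟩
  have hnonneg : ∀ z ∈ Set.Icc (0:ℝ) 1, 0 ≤ H z := by
    intro z hz
    apply Finset.sum_nonneg
    intro k hk
    have hk2 : 2 ≤ k := (Finset.mem_Icc.mp hk).1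
    have : (1:ℝ) ≤ (k:ℝ) := by exact_mod_cast le_trans (by norm_num) hk2
    have h2 : (0:ℝ) ≤ 1 - z := by linarith [hz.2]
    exact mul_nonneg (mul_nonneg (by positivity) (by linarith))
      (mul_nonneg (pow_nonneg hz.1 _) (pow_nonneg h2 _))
  have hconst : ∀ z ∈ Set.Ico (0:ℝ) x, (n:ℝ) * ((n:ℝ)-1)/4 ≤ H z := by
    intro z hz
    obtain ⟨hz0, hzx⟩ := hz
    have hz1 : z ≤ 1/(2*(n:ℝ)) := le_trans hzx.le hx1
    have hpos : (0:ℝ) < 2*(n:ℝ) := by linarith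
    have hz2 : (n:ℝ) * z ≤ 1/2 := by
      rw [le_div_iff₀ hpos] at hz1; nlinarith
    have hz3 : z ≤ 1 := le_trans hzx.le hx1'
    have h1z : (0:ℝ) ≤ 1 - z := by linarith
    have hbern : (1:ℝ)/2 ≤ (1-z) ^ n := by
      have := one_add_mul_le_pow (a := -z) (by linarith) n
      have h' : 1 + (n:ℝ) * (-z) ≤ (1 + -z)^n := this
      calc (1:ℝ)/2 ≤ 1 + (n:ℝ) * (-z) := by nlinarith
        _ ≤ (1 + -z)^n := h'
        _ = (1-z)^n := by ring_nf
    have hpow : (1-z)^n ≤ (1-z)^(n-2) :=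
      pow_le_pow_of_le_one h1z (by linarith) (by omega)
    have hsingle : (n.choose 2 : ℝ) * ((2:ℝ)-1) * (z ^ (2-2) * (1-z) ^ (n-2)) ≤ H z := by
      have h2mem : 2 ∈ Icc 2 n := Finset.mem_Icc.mpr ⟨le_refl 2, hn⟩
      have := Finset.single_le_sum (f := fun k => (n.choose k : ℝ) * ((k:ℝ)-1) *
        (z ^ (k-2) * (1-z) ^ (n-k)))
        (fun k hk => by
          have hk2 : 2 ≤ k := (Finset.mem_Icc.mp hk).1
          have hk1 : (1:ℝ) ≤ (k:ℝ) := by exact_mod_cast le_trans (by norm_num) hk2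
          have h1z' : (0:ℝ) ≤ 1 - z := h1z
          exact mul_nonneg (mul_nonneg (by positivity) (by linarith))
            (mul_nonneg (pow_nonneg hz0 _) (pow_nonneg h1z' _))) h2mem
      simpa using this
    have hch : (n.choose 2 : ℝ) = (n:ℝ) * ((n:ℝ)-1)/2 := Nat.cast_choose_two (K := ℝ) n
    calc (n:ℝ) * ((n:ℝ)-1)/4 = ((n:ℝ) * ((n:ℝ)-1)/2) * ((2:ℝ)-1) * (1 * (1/2)) := by ring
      _ ≤ (n.choose 2 : ℝ) * ((2:ℝ)-1) * (z ^ (2-2) * (1-z) ^ (n-2)) := by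
          rw [hch]
          have hnn : (0:ℝ) ≤ (n:ℝ) * ((n:ℝ)-1)/2 * ((2:ℝ)-1) := by nlinarith
          apply mul_le_mul_of_nonneg_left _ hnn
          have : z ^ (2-2) = (1:ℝ) := by norm_num
          rw [this, one_mul, one_mul]
          exact le_trans hbern hpow
      _ ≤ H z := hsingle
  calc (n:ℝ) * ((n:ℝ)-1)/4 * (Λ (Set.Ico 0 x)).toReal
      ≤ ∫ z in Set.Ico (0:ℝ) x, H z ∂Λ :=
        setIntegral_ge_of_const_le_real measurableSet_Ico (measure_ne_top Λ _) hconst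
          (hHint.mono_set hsub)
    _ ≤ ∫ z in Set.Icc (0:ℝ) 1, H z ∂Λ := by
        apply setIntegral_mono_set hHint
        · have h5 : ∀ᵐ z ∂Λ.restrict (Set.Icc (0:ℝ) 1), 0 ≤ H z :=
            (ae_restrict_iff' measurableSet_Icc).mpr (Filter.Eventually.of_forall hnonneg)
          exact h5
        · exact HasSubset.Subset.eventuallyLE hsub

set_option maxHeartbeats 1000000 in

/-- With the data of the `Λ`-Wright–Fisher model with mutation, selection and
environment, if moreover there are `δ ∈ (0,1)` and `x₀ ∈ (0,1)` with
`Λ([0,x)) ≥ x^δ` for all `x ∈ (0,x₀)`, then there exist `γ ∈ (1,2)` and `n₀ ∈ ℕ`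
such that `B(n) ≤ −n^γ` for every `n ≥ n₀`. -/
theorem rate_operator_superlinear
    (Λ μ ν : Measure ℝ)
    [IsFiniteMeasure Λ] [IsFiniteMeasure μ] [IsFiniteMeasure ν]
    (hΛ : Λ (Set.Icc (0:ℝ) 1)ᶜ = 0)
    (hμ : μ (Set.Ioo (-1:ℝ) 1)ᶜ = 0) (hν : ν (Set.Ioo (-1:ℝ) 1)ᶜ = 0)
    (hμ0 : μ {0} = 0) (hν0 : ν {0} = 0)
    (θa θA : ℝ) (hθa : 0 ≤ θa) (hθA : 0 ≤ θA)
    (κ : ℕ) (hκ : 2 ≤ κ) (β : ℕ → ℝ) (hβ : ∀ ℓ, 0 ≤ β ℓ)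
    (lam : ℕ → ℕ → ℝ)
    (hlam : ∀ n k, lam n k = ∫ z in Set.Icc (0:ℝ) 1, z ^ (k - 2) * (1 - z) ^ (n - k) ∂Λ)
    (sig : ℕ → ℕ → ℝ)
    (hsig : ∀ n k, sig n k = ∫ z, |z| ^ (k - 1) * (1 - |z|) ^ (n - k) ∂μ)
    (m : ℕ → ℕ → ℝ)
    (hm : ∀ n k, m n k = ∫ z, |z| ^ (k - 1) * (1 - |z|) ^ (n - k) ∂ν)
    (B : ℕ → ℝ)
    (hB : ∀ n : ℕ, B n =
      -(∑ k ∈ Finset.Icc 2 n, (n.choose k : ℝ) * ((k : ℝ) - 1) * lam n k)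
      + ∑ k ∈ Finset.Icc 1 n, (n.choose k : ℝ) * (k : ℝ) * sig n k
      + (n : ℝ) * ∑ ℓ ∈ Finset.Icc 2 κ, β ℓ * ((ℓ : ℝ) - 1)
      - ∑ k ∈ Finset.Icc 1 n, (n.choose k : ℝ) * (k : ℝ) * m n k
      - (n : ℝ) * (θa + θA))
    (hcond : ∃ δ ∈ Set.Ioo (0:ℝ) 1, ∃ x₀ ∈ Set.Ioo (0:ℝ) 1,
      ∀ x ∈ Set.Ioo (0:ℝ) x₀, ENNReal.ofReal (x ^ δ) ≤ Λ (Set.Ico 0 x)) :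
    ∃ γ ∈ Set.Ioo (1:ℝ) 2, ∃ n₀ : ℕ, ∀ n : ℕ, n₀ ≤ n → B n ≤ -(n : ℝ) ^ γ := by
  obtain ⟨δ, ⟨hδ0, hδ1⟩, x₀, ⟨hx00, hx01⟩, hΛx⟩ := hcond
  set ε : ℝ := (1 - δ)/2 with hε
  have hε0 : 0 < ε := by rw [hε]; linarith
  have hε1 : ε < 1/2 := by rw [hε]; linarith
  refine ⟨1 + ε, ⟨by linarith, by linarith⟩, ?_⟩
  set K : ℝ := (μ Set.univ).toReal + ∑ ℓ ∈ Icc 2 κ, β ℓ * ((ℓ:ℝ)-1) with hKdef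
  have hK0 : 0 ≤ K := by
    apply add_nonneg ENNReal.toReal_nonneg
    apply Finset.sum_nonneg
    intro ℓ hℓ
    have h2 : 2 ≤ ℓ := (Finset.mem_Icc.mp hℓ).1
    have : (2:ℝ) ≤ (ℓ:ℝ) := by exact_mod_cast h2
    exact mul_nonneg (hβ ℓ) (by linarith)
  set c' : ℝ := (x₀/2)^δ / 8 with hc'def
  have hc' : 0 < c' := by
    rw [hc'def]
    have := Real.rpow_pos_of_pos (show (0:ℝ) < x₀/2 by linarith) δ
    positivity
  obtain ⟨N, hN⟩ := exists_nat_ge (max (((1+K)/c') ^ ε⁻¹) 2)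
  refine ⟨N, fun n hn => ?_⟩
  have hNn : ((max (((1+K)/c') ^ ε⁻¹) 2 : ℝ)) ≤ (n:ℝ) :=
    le_trans hN (by exact_mod_cast hn)
  have hn2R : (2:ℝ) ≤ (n:ℝ) := le_trans (le_max_right _ _) hNn
  have hn2 : 2 ≤ n := by exact_mod_cast hn2R
  have hnpos : (0:ℝ) < (n:ℝ) := by linarith
  have hnM : ((1+K)/c') ^ ε⁻¹ ≤ (n:ℝ) := le_trans (le_max_left _ _) hNn
  -- selection term
  have hσ : ∑ k ∈ Icc 1 n, (n.choose k : ℝ) * (k:ℝ) * sig n k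
      = (n:ℝ) * (μ Set.univ).toReal := by
    simp only [hsig]
    exact sigma_sum μ hμ n
  -- mutation term nonneg
  have hmpos : 0 ≤ ∑ k ∈ Icc 1 n, (n.choose k : ℝ) * (k:ℝ) * m n k := by
    apply Finset.sum_nonneg
    intro k hk
    have hm0 : 0 ≤ m n k := by
      rw [hm]
      apply integral_nonneg_of_ae
      have hae : ∀ᵐ z ∂ν, z ∈ Set.Ioo (-1:ℝ) 1 := by rw [ae_iff]; exact hν
      filter_upwards [hae] with z hz
      have h1 : |z| < 1 := abs_lt.mpr ⟨hz.1, hz.2⟩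
      exact mul_nonneg (pow_nonneg (abs_nonneg z) _) (pow_nonneg (by linarith) _)
    positivity
  -- Lambda term
  set x : ℝ := x₀/(2*(n:ℝ)) with hxdef
  have hxpos : 0 < x := by rw [hxdef]; positivity
  have hx12 : x ≤ 1/(2*(n:ℝ)) := by
    rw [hxdef, div_le_div_iff₀ (by positivity) (by positivity)]
    nlinarith
  have hΛlb : (n:ℝ)*((n:ℝ)-1)/4 * (Λ (Set.Ico 0 x)).toReal
      ≤ ∑ k ∈ Icc 2 n, (n.choose k : ℝ) * ((k:ℝ)-1) * lam n k := by
    simp only [hlam]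
    exact lam_sum_lb Λ n hn2 x hxpos hx12
  have hxlt : x < x₀ := by
    rw [hxdef, div_lt_iff₀ (by positivity)]
    nlinarith
  have hmeas : x ^ δ ≤ (Λ (Set.Ico 0 x)).toReal := by
    have h := hΛx x ⟨hxpos, hxlt⟩
    calc x ^ δ = (ENNReal.ofReal (x ^ δ)).toReal :=
          (ENNReal.toReal_ofReal (Real.rpow_nonneg hxpos.le δ)).symm
      _ ≤ (Λ (Set.Ico 0 x)).toReal := ENNReal.toReal_mono (measure_ne_top Λ _) h
  have hn14 : (0:ℝ) ≤ (n:ℝ)*((n:ℝ)-1)/4 := by nlinarith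
  have hΛlb2 : (n:ℝ)*((n:ℝ)-1)/4 * x ^ δ
      ≤ ∑ k ∈ Icc 2 n, (n.choose k : ℝ) * ((k:ℝ)-1) * lam n k :=
    le_trans (mul_le_mul_of_nonneg_left hmeas hn14) hΛlb
  -- B bound
  have hθ : (0:ℝ) ≤ (n:ℝ) * (θa + θA) := by positivity
  have hnK : (n:ℝ)*K = (n:ℝ)*(μ Set.univ).toReal
      + (n:ℝ)*∑ ℓ ∈ Icc 2 κ, β ℓ * ((ℓ:ℝ)-1) := by rw [hKdef]; ring
  have hBb : B n ≤ -((n:ℝ)*((n:ℝ)-1)/4 * x ^ δ) + (n:ℝ)*K := by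
    rw [hB n]
    linarith [hΛlb2, hσ, hmpos, hθ, hnK]
  -- numeric estimates
  have e1 : x ^ δ = (x₀/2)^δ / (n:ℝ)^δ := by
    rw [show x = (x₀/2)/(n:ℝ) by rw [hxdef, div_div],
      Real.div_rpow (by positivity) hnpos.le]
  have hd : (0:ℝ) < (n:ℝ)^δ := Real.rpow_pos_of_pos hnpos δ
  have hx2δ : (0:ℝ) ≤ (x₀/2)^δ := Real.rpow_nonneg (by linarith) δ
  have e2 : c' * (n:ℝ)^((2:ℝ)-δ) ≤ (n:ℝ)*((n:ℝ)-1)/4 * x ^ δ := by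
    rw [e1, Real.rpow_sub hnpos, Real.rpow_two]
    have key : c' * ((n:ℝ)*(n:ℝ)) ≤ (n:ℝ)*((n:ℝ)-1)/4 * (x₀/2)^δ := by
      have h88 : (n:ℝ)*(n:ℝ)/8 ≤ (n:ℝ)*((n:ℝ)-1)/4 := by nlinarith
      calc c' * ((n:ℝ)*(n:ℝ)) = (x₀/2)^δ * ((n:ℝ)*(n:ℝ)/8) := by rw [hc'def]; ring
        _ ≤ (x₀/2)^δ * ((n:ℝ)*((n:ℝ)-1)/4) := mul_le_mul_of_nonneg_left h88 hx2δ
        _ = (n:ℝ)*((n:ℝ)-1)/4 * (x₀/2)^δ := by ring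
    calc c' * ((n:ℝ)^2 / (n:ℝ)^δ) = (c' * ((n:ℝ)*(n:ℝ))) / (n:ℝ)^δ := by ring
      _ ≤ ((n:ℝ)*((n:ℝ)-1)/4 * (x₀/2)^δ) / (n:ℝ)^δ := by
          exact div_le_div_of_nonneg_right key hd.le
      _ = (n:ℝ)*((n:ℝ)-1)/4 * ((x₀/2)^δ / (n:ℝ)^δ) := by ring
  have hdiv0 : (0:ℝ) ≤ (1+K)/c' := by positivity
  have e3 : 1 + K ≤ c' * (n:ℝ)^ε := by
    have h7 : (1+K)/c' ≤ (n:ℝ)^ε := by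
      calc (1+K)/c' = (((1+K)/c')^(ε⁻¹))^ε :=
            (Real.rpow_inv_rpow hdiv0 (ne_of_gt hε0)).symm
        _ ≤ (n:ℝ)^ε := Real.rpow_le_rpow (Real.rpow_nonneg hdiv0 _) hnM hε0.le
    rw [div_le_iff₀ hc'] at h7
    linarith
  have e4 : (n:ℝ) ≤ (n:ℝ)^(1+ε) := by
    calc (n:ℝ) = (n:ℝ)^(1:ℝ) := (Real.rpow_one _).symm
      _ ≤ (n:ℝ)^(1+ε) := Real.rpow_le_rpow_of_exponent_le (by linarith) (by linarith)
  have e5 : (n:ℝ)^((2:ℝ)-δ) = (n:ℝ)^ε * (n:ℝ)^(1+ε) := by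
    rw [← Real.rpow_add hnpos]
    congr 1
    rw [hε]; ring
  have hpow0 : (0:ℝ) ≤ (n:ℝ)^(1+ε) := Real.rpow_nonneg hnpos.le _
  have hpowε : (0:ℝ) ≤ (n:ℝ)^ε := Real.rpow_nonneg hnpos.le _
  have key2 : (n:ℝ)^(1+ε) + K * (n:ℝ) ≤ (n:ℝ)*((n:ℝ)-1)/4 * x ^ δ := by
    calc (n:ℝ)^(1+ε) + K * (n:ℝ) ≤ (n:ℝ)^(1+ε) + K * (n:ℝ)^(1+ε) := by nlinarith
      _ = (1+K) * (n:ℝ)^(1+ε) := by ring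
      _ ≤ (c' * (n:ℝ)^ε) * (n:ℝ)^(1+ε) := mul_le_mul_of_nonneg_right e3 hpow0
      _ = c' * (n:ℝ)^((2:ℝ)-δ) := by rw [e5]; ring
      _ ≤ _ := e2
  linarith [hBb, key2]
end

section
/- Let γ, δ, c₁, K be real numbers with 1 < δ < γ, c₁ ≥ 0, K ≥ 1 and K^γ − K^δ > c₁. Let φ : [0,1] → ℝ be differentiable with φ(t) ≥ 0 and φ'(t) ≤ −φ(t)^γ + c₁ for all t ∈ [0,1]. Then φ(1) ≤ max(K, (δ−1)^{−1/(δ−1)}). -/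
/-- Let `1 < δ < γ`, `c₁ ≥ 0`, `K ≥ 1` with `K^γ − K^δ > c₁`. If `φ : [0,1] → ℝ` is
differentiable (one-sided at the endpoints) with `φ(t) ≥ 0` and
`φ'(t) ≤ −φ(t)^γ + c₁` on `[0,1]`, then `φ(1) ≤ max(K, (δ−1)^{−1/(δ−1)})`. -/
theorem ode_bound_at_one (γ δ c₁ K : ℝ) (hδ : 1 < δ) (hγ : δ < γ)
    (hc₁ : 0 ≤ c₁) (hK : 1 ≤ K) (hKγ : c₁ < K ^ γ - K ^ δ)
    (φ φ' : ℝ → ℝ)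
    (hderiv : ∀ t ∈ Set.Icc (0:ℝ) 1, HasDerivWithinAt φ (φ' t) (Set.Icc (0:ℝ) 1) t)
    (hnonneg : ∀ t ∈ Set.Icc (0:ℝ) 1, 0 ≤ φ t)
    (hineq : ∀ t ∈ Set.Icc (0:ℝ) 1, φ' t ≤ -(φ t) ^ γ + c₁) :
    φ 1 ≤ max K ((δ - 1) ^ (-(1 / (δ - 1)))) := by
  have hK0 : (0:ℝ) < K := lt_of_lt_of_le one_pos hK
  -- key monotonicity fact: for x ≥ K, c₁ < x^γ - x^δ
  have hkey : ∀ x : ℝ, K ≤ x → c₁ < x ^ γ - x ^ δ := by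
    intro x hx
    have hx1 : (1:ℝ) ≤ x := hK.trans hx
    have hx0 : (0:ℝ) < x := lt_of_lt_of_le one_pos hx1
    have h1 : K ^ δ ≤ x ^ δ := Real.rpow_le_rpow hK0.le hx (by linarith)
    have h2 : K ^ (γ - δ) ≤ x ^ (γ - δ) := Real.rpow_le_rpow hK0.le hx (by linarith)
    have h3 : (1:ℝ) ≤ K ^ (γ - δ) := by
      have := Real.rpow_le_rpow_of_exponent_le hK (le_of_lt (by linarith : (0:ℝ) < γ - δ))
      simpa using this
    have h4 : K ^ δ * (K ^ (γ - δ) - 1) ≤ x ^ δ * (x ^ (γ - δ) - 1) :=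
      mul_le_mul h1 (by linarith) (by linarith) (Real.rpow_nonneg hx0.le _)
    have hxγ : x ^ δ * x ^ (γ - δ) = x ^ γ := by
      rw [← Real.rpow_add hx0]; ring_nf
    have hKγ' : K ^ δ * K ^ (γ - δ) = K ^ γ := by
      rw [← Real.rpow_add hK0]; ring_nf
    nlinarith [h4]
  have hcont : ContinuousOn φ (Set.Icc (0:ℝ) 1) :=
    fun t ht => (hderiv t ht).continuousWithinAt
  have hHD : ∀ t ∈ Set.Ioo (0:ℝ) 1, HasDerivAt φ (φ' t) t := by
    intro t ht
    exact (hderiv t (Set.Ioo_subset_Icc_self ht)).hasDerivAt (Icc_mem_nhds ht.1 ht.2)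
  -- whenever φ t ≥ K, φ' t < -(φ t)^δ ≤ 0
  have hneg : ∀ t ∈ Set.Icc (0:ℝ) 1, K ≤ φ t → φ' t < -(φ t) ^ δ := by
    intro t ht hKt
    have := hineq t ht
    have := hkey (φ t) hKt
    linarith
  by_cases hE : ∃ s ∈ Set.Icc (0:ℝ) 1, φ s ≤ K
  · -- invariance: φ 1 ≤ K
    refine le_trans ?_ (le_max_left _ _)
    by_contra hlt
    push_neg at hlt
    set S : Set ℝ := Set.Icc (0:ℝ) 1 ∩ φ ⁻¹' Set.Iic K with hS
    have hclosed : IsClosed S :=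
      hcont.preimage_isClosed_of_isClosed isClosed_Icc isClosed_Iic
    have hne : S.Nonempty := by
      obtain ⟨s, hs, hsK⟩ := hE; exact ⟨s, hs, hsK⟩
    have hbdd : BddAbove S := ⟨1, fun t ht => ht.1.2⟩
    set s := sSup S with hs
    have hsS : s ∈ S := hclosed.csSup_mem hne hbdd
    have hs01 : s ∈ Set.Icc (0:ℝ) 1 := hsS.1
    have hsK : φ s ≤ K := hsS.2
    have hs1 : s < 1 := lt_of_le_of_ne hs01.2 (by
      intro h; rw [h] at hsK; linarith)
    have hgt : ∀ t ∈ Set.Ioo s 1, K < φ t := by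
      intro t ht
      by_contra h
      push_neg at h
      have htS : t ∈ S := ⟨⟨le_trans hs01.1 ht.1.le, ht.2.le⟩, h⟩
      have : t ≤ s := le_csSup hbdd htS
      exact absurd this (not_le.mpr ht.1)
    have hanti : AntitoneOn φ (Set.Icc s 1) := by
      apply antitoneOn_of_deriv_nonpos (convex_Icc s 1)
      · exact hcont.mono (Set.Icc_subset_Icc hs01.1 le_rfl)
      · intro t ht
        rw [interior_Icc] at ht
        have ht' : t ∈ Set.Ioo (0:ℝ) 1 := ⟨lt_of_le_of_lt hs01.1 ht.1, ht.2⟩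
        exact (hHD t ht').differentiableAt.differentiableWithinAt
      · intro t ht
        rw [interior_Icc] at ht
        have ht' : t ∈ Set.Ioo (0:ℝ) 1 := ⟨lt_of_le_of_lt hs01.1 ht.1, ht.2⟩
        rw [(hHD t ht').deriv]
        have h1 := hneg t (Set.Ioo_subset_Icc_self ht') (hgt t ht).le
        have h2 : (0:ℝ) ≤ (φ t) ^ δ :=
          Real.rpow_nonneg (hnonneg t (Set.Ioo_subset_Icc_self ht')) _
        linarith
    have := hanti (Set.left_mem_Icc.mpr hs1.le) (Set.right_mem_Icc.mpr hs1.le) hs1.le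
    linarith
  · -- φ > K everywhere on [0,1]: blow-up comparison
    push_neg at hE
    refine le_trans ?_ (le_max_right _ _)
    have hpos : ∀ t ∈ Set.Icc (0:ℝ) 1, 0 < φ t :=
      fun t ht => lt_of_lt_of_le hK0 (hE t ht).le
    set g : ℝ → ℝ := fun t => (φ t) ^ (1 - δ) - (δ - 1) * t with hg
    have hgd : ∀ t ∈ Set.Ioo (0:ℝ) 1,
        HasDerivAt g ((1 - δ) * (φ t) ^ (1 - δ - 1) * φ' t - (δ - 1)) t := by
      intro t ht
      have hne0 : φ t ≠ 0 := (hpos t (Set.Ioo_subset_Icc_self ht)).ne'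
      have h1 : HasDerivAt (fun x : ℝ => x ^ (1 - δ)) ((1 - δ) * (φ t) ^ (1 - δ - 1)) (φ t) :=
        Real.hasDerivAt_rpow_const (Or.inl hne0)
      have h2 : HasDerivAt (fun t => (φ t) ^ (1 - δ))
          ((1 - δ) * (φ t) ^ (1 - δ - 1) * φ' t) t := h1.comp t (hHD t ht)
      have h3 : HasDerivAt (fun t : ℝ => (δ - 1) * t) (δ - 1) t := by
        simpa using (hasDerivAt_id t).const_mul (δ - 1)
      exact h2.sub h3
    have hdnn : ∀ t ∈ Set.Ioo (0:ℝ) 1,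
        0 ≤ (1 - δ) * (φ t) ^ (1 - δ - 1) * φ' t - (δ - 1) := by
      intro t ht
      have htI := Set.Ioo_subset_Icc_self ht
      have ha : 0 < φ t := hpos t htI
      have hKt : K ≤ φ t := (hE t htI).le
      have hφ' : φ' t ≤ -(φ t) ^ δ := (hneg t htI hKt).le
      have hc : (1 - δ) * (φ t) ^ (1 - δ - 1) ≤ 0 := by
        apply mul_nonpos_of_nonpos_of_nonneg (by linarith) (Real.rpow_nonneg ha.le _)
      have hmul := mul_le_mul_of_nonpos_left hφ' hc
      have hid : (1 - δ) * (φ t) ^ (1 - δ - 1) * (-(φ t) ^ δ)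
          = δ - 1 := by
        have : (φ t) ^ (1 - δ - 1) * (φ t) ^ δ = 1 := by
          rw [← Real.rpow_add ha]
          norm_num
        nlinarith [this]
      linarith
    have hgc : ContinuousOn g (Set.Icc (0:ℝ) 1) := by
      apply ContinuousOn.sub
      · exact hcont.rpow_const (fun t ht => Or.inl (hpos t ht).ne')
      · exact (continuous_const.mul continuous_id).continuousOn
    have hmono : MonotoneOn g (Set.Icc (0:ℝ) 1) := by
      apply monotoneOn_of_deriv_nonneg (convex_Icc 0 1) hgc
      · intro t ht
        rw [interior_Icc] at ht
        exact (hgd t ht).differentiableAt.differentiableWithinAt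
      · intro t ht
        rw [interior_Icc] at ht
        rw [(hgd t ht).deriv]
        exact hdnn t ht
    have h01 := hmono (Set.left_mem_Icc.mpr zero_le_one) (Set.right_mem_Icc.mpr zero_le_one)
      zero_le_one
    have hg0 : 0 ≤ (φ 0) ^ (1 - δ) :=
      Real.rpow_nonneg (hpos 0 (Set.left_mem_Icc.mpr zero_le_one)).le _
    have hA : δ - 1 ≤ (φ 1) ^ (1 - δ) := by
      simp only [hg] at h01
      linarith
    -- conclude φ 1 ≤ (δ-1)^(-(1/(δ-1)))
    have hb : (0:ℝ) < δ - 1 := by linarith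
    have ha1 : 0 < φ 1 := hpos 1 (Set.right_mem_Icc.mpr zero_le_one)
    have hzn : -(1 / (δ - 1)) ≤ 0 := by
      have : (0:ℝ) < 1 / (δ - 1) := by positivity
      linarith
    have := Real.rpow_le_rpow_of_nonpos hb hA hzn
    have hid1 : ((φ 1) ^ (1 - δ)) ^ (-(1 / (δ - 1))) = φ 1 := by
      rw [← Real.rpow_mul ha1.le]
      have : (1 - δ) * -(1 / (δ - 1)) = 1 := by field_simp; ring
      rw [this, Real.rpow_one]
    rw [hid1] at this
    exact this
end

section
/- Let ν₁ and ν₂ be Borel probability measures on [0,1]. Then 2 · sup { |∫_{[0,1]} f dν₁ − ∫_{[0,1]} f dν₂| : f : [0,1] → ℝ is 1-Lipschitz } ≤ sup { |∫_{[0,1]} g dν₁ − ∫_{[0,1]} g dν₂| : g : [0,1] → ℝ is continuous with sup_{x∈[0,1]} |g(x)| ≤ 1 }. -/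
open MeasureTheory

/-- Helper: the integral of a function bounded by 1 over `[0,1]` w.r.t. a probability
measure concentrated on `[0,1]` has absolute value at most 1. -/
lemma aux_abs_integral_le_one (ν : Measure ℝ) [IsProbabilityMeasure ν]
    (hν : ν (Set.Icc (0:ℝ) 1) = 1) (g : ℝ → ℝ)
    (hgb : ∀ x ∈ Set.Icc (0:ℝ) 1, |g x| ≤ 1) :
    |∫ x in Set.Icc (0:ℝ) 1, g x ∂ν| ≤ 1 := by
  have hae : ∀ᵐ x ∂ν.restrict (Set.Icc (0:ℝ) 1), ‖g x‖ ≤ 1 := by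
    rw [ae_restrict_iff' measurableSet_Icc]
    exact Filter.Eventually.of_forall fun x hx => hgb x hx
  have := norm_integral_le_of_norm_le_const (μ := ν.restrict (Set.Icc (0:ℝ) 1)) hae
  simpa [Measure.restrict_apply_univ, hν, measureReal_def] using this

/-- For Borel probability measures `ν₁, ν₂` on `[0,1]`, twice the Kantorovich–Rubinstein
dual expression of `W₁(ν₁,ν₂)` is at most the Radon distance `d_Rad(ν₁,ν₂)`. -/
theorem two_wasserstein_le_radon (ν₁ ν₂ : Measure ℝ)
    [IsProbabilityMeasure ν₁] [IsProbabilityMeasure ν₂]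
    (h₁ : ν₁ (Set.Icc (0:ℝ) 1)ᶜ = 0) (h₂ : ν₂ (Set.Icc (0:ℝ) 1)ᶜ = 0) :
    2 * sSup {d : ℝ | ∃ f : ℝ → ℝ, LipschitzOnWith 1 f (Set.Icc (0:ℝ) 1) ∧
        d = |(∫ x in Set.Icc (0:ℝ) 1, f x ∂ν₁) - ∫ x in Set.Icc (0:ℝ) 1, f x ∂ν₂|}
      ≤ sSup {d : ℝ | ∃ g : ℝ → ℝ, ContinuousOn g (Set.Icc (0:ℝ) 1) ∧
        (∀ x ∈ Set.Icc (0:ℝ) 1, |g x| ≤ 1) ∧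
        d = |(∫ x in Set.Icc (0:ℝ) 1, g x ∂ν₁) - ∫ x in Set.Icc (0:ℝ) 1, g x ∂ν₂|} := by
  have hν₁I : ν₁ (Set.Icc (0:ℝ) 1) = 1 := by
    have h := measure_add_measure_compl (μ := ν₁) (measurableSet_Icc (a := (0:ℝ)) (b := 1))
    rw [h₁, add_zero, measure_univ] at h; exact h
  have hν₂I : ν₂ (Set.Icc (0:ℝ) 1) = 1 := by
    have h := measure_add_measure_compl (μ := ν₂) (measurableSet_Icc (a := (0:ℝ)) (b := 1))
    rw [h₂, add_zero, measure_univ] at h; exact h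
  set S₁ := {d : ℝ | ∃ f : ℝ → ℝ, LipschitzOnWith 1 f (Set.Icc (0:ℝ) 1) ∧
      d = |(∫ x in Set.Icc (0:ℝ) 1, f x ∂ν₁) - ∫ x in Set.Icc (0:ℝ) 1, f x ∂ν₂|} with hS₁
  set S₂ := {d : ℝ | ∃ g : ℝ → ℝ, ContinuousOn g (Set.Icc (0:ℝ) 1) ∧
      (∀ x ∈ Set.Icc (0:ℝ) 1, |g x| ≤ 1) ∧
      d = |(∫ x in Set.Icc (0:ℝ) 1, g x ∂ν₁) - ∫ x in Set.Icc (0:ℝ) 1, g x ∂ν₂|} with hS₂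
  -- S₂ is bounded above by 2
  have hbdd : BddAbove S₂ := by
    refine ⟨2, ?_⟩
    rintro d ⟨g, hgc, hgb, rfl⟩
    have hA := aux_abs_integral_le_one ν₁ hν₁I g hgb
    have hB := aux_abs_integral_le_one ν₂ hν₂I g hgb
    have := abs_sub (∫ x in Set.Icc (0:ℝ) 1, g x ∂ν₁) (∫ x in Set.Icc (0:ℝ) 1, g x ∂ν₂)
    linarith
  -- the key step : each element of S₁ doubled is bounded by sSup S₂
  have hkey : ∀ d ∈ S₁, 2 * d ≤ sSup S₂ := by
    rintro d ⟨f, hf, rfl⟩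
    have hfc : ContinuousOn f (Set.Icc (0:ℝ) 1) := hf.continuousOn
    have hcpt : IsCompact (Set.Icc (0:ℝ) 1) := isCompact_Icc
    have hne : (Set.Icc (0:ℝ) 1).Nonempty := Set.nonempty_Icc.mpr zero_le_one
    obtain ⟨a, haI, ha⟩ := hcpt.exists_isMaxOn hne hfc
    obtain ⟨b, hbI, hb⟩ := hcpt.exists_isMinOn hne hfc
    have hab : f a - f b ≤ 1 := by
      have h := hf.dist_le_mul a haI b hbI
      have hd : dist a b ≤ 1 := by
        rw [Real.dist_eq, abs_le]
        constructor <;> simp only [Set.mem_Icc] at haI hbI <;>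
          linarith [haI.1, haI.2, hbI.1, hbI.2]
      calc f a - f b ≤ |f a - f b| := le_abs_self _
        _ = dist (f a) (f b) := (Real.dist_eq _ _).symm
        _ ≤ 1 * dist a b := by simpa using h
        _ ≤ 1 := by linarith
    set c : ℝ := (f a + f b) / 2 with hc
    set g : ℝ → ℝ := fun x => 2 * (f x - c) with hg
    have hgc : ContinuousOn g (Set.Icc (0:ℝ) 1) :=
      (continuousOn_const.mul (hfc.sub continuousOn_const))
    have hgb : ∀ x ∈ Set.Icc (0:ℝ) 1, |g x| ≤ 1 := by
      intro x hx
      have hmax : f x ≤ f a := ha hx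
      have hmin : f b ≤ f x := hb hx
      rw [hg, abs_le]
      constructor <;> simp only [hc] <;> nlinarith
    have hint₁ : IntegrableOn f (Set.Icc (0:ℝ) 1) ν₁ := hfc.integrableOn_compact hcpt
    have hint₂ : IntegrableOn f (Set.Icc (0:ℝ) 1) ν₂ := hfc.integrableOn_compact hcpt
    have hI₁ : ∫ x in Set.Icc (0:ℝ) 1, g x ∂ν₁
        = 2 * ((∫ x in Set.Icc (0:ℝ) 1, f x ∂ν₁) - c) := by
      rw [hg]; rw [integral_const_mul, integral_sub hint₁ (integrable_const c), setIntegral_const]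
      simp [hν₁I, measureReal_def]
    have hI₂ : ∫ x in Set.Icc (0:ℝ) 1, g x ∂ν₂
        = 2 * ((∫ x in Set.Icc (0:ℝ) 1, f x ∂ν₂) - c) := by
      rw [hg]; rw [integral_const_mul, integral_sub hint₂ (integrable_const c), setIntegral_const]
      simp [hν₂I, measureReal_def]
    have hmem : 2 * |(∫ x in Set.Icc (0:ℝ) 1, f x ∂ν₁) - ∫ x in Set.Icc (0:ℝ) 1, f x ∂ν₂| ∈ S₂ := by
      refine ⟨g, hgc, hgb, ?_⟩
      rw [hI₁, hI₂]
      rw [show (2 : ℝ) * ((∫ x in Set.Icc (0:ℝ) 1, f x ∂ν₁) - c)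
          - 2 * ((∫ x in Set.Icc (0:ℝ) 1, f x ∂ν₂) - c)
          = 2 * ((∫ x in Set.Icc (0:ℝ) 1, f x ∂ν₁) - ∫ x in Set.Icc (0:ℝ) 1, f x ∂ν₂) by ring]
      rw [abs_mul]
      norm_num
    exact le_csSup hbdd hmem
  have hne₁ : S₁.Nonempty := by
    refine ⟨0, fun _ => 0, ?_, by simp⟩
    intro x _ y _; simp
  have : sSup S₁ ≤ sSup S₂ / 2 := by
    refine csSup_le hne₁ fun d hd => ?_
    have := hkey d hd
    linarith
  linarith
end
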